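/- arXiv:2001.08567 — 5 statements merged into one kernel-verified Lean document; each statement's English description precedes it below -/
import Mathlib

section
/- Let T be a small triangulated category and H : T → Ab a homological functor (H sends distinguished triangles to exact sequences). Then the category of elements of H is cofiltered; equivalently, H is a filtered colimit of representable functors T(-, X) in the category of additive functors T^op → Ab. -/
/-!
The cone over `(X, x)` and `(Y, y)` is `(X ⊞ Y, inl x + inr y)`. To equalize
`f g : (X, x) ⟶ (Y, y)`, note that `H (f - g)` kills `x`; completing `f - g` to a distinguished
triangle `W → X → Y → W⟦1⟧` gives a weak kernel `v : W → X` of `f - g`, and exactness of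
`H W → H X → H Y` lifts `x` along `v`.
-/

open CategoryTheory Limits

namespace CategoryTheory.Functor

variable {C : Type*} [Category C] [Preadditive C]

section Biprod

variable [HasBinaryBiproducts C] (F : C ⥤ AddCommGrpCat) [F.Additive] {X Y : C}
  (x : F.obj X) (y : F.obj Y)

lemma map_fst_map_inl_add_map_inr :
    F.map biprod.fst (F.map biprod.inl x + F.map biprod.inr y) = x := by
  simp [← ConcreteCategory.comp_apply, ← F.map_comp]

lemma map_snd_map_inl_add_map_inr :
    F.map biprod.snd (F.map biprod.inl x + F.map biprod.inr y) = y := by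
  simp [← ConcreteCategory.comp_apply, ← F.map_comp]

end Biprod

open Pretriangulated in
lemma IsHomological.exists_eq_map_of_map_eq_zero [HasZeroObject C] [HasShift C ℤ]
    [∀ n : ℤ, (shiftFunctor C n).Additive] [Pretriangulated C]
    (F : C ⥤ AddCommGrpCat) [F.IsHomological] {X Y : C} (u : X ⟶ Y) (x : F.obj X)
    (hx : F.map u x = 0) : ∃ (W : C) (v : W ⟶ X) (w : F.obj W), v ≫ u = 0 ∧ F.map v w = x := by
  obtain ⟨_, _, _, hT⟩ := distinguished_cocone_triangle u
  have hT' := inv_rot_of_distTriang _ hT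
  obtain ⟨w, hw⟩ := (ShortComplex.ab_exact_iff _).1 (F.map_distinguished_exact _ hT') x hx
  exact ⟨_, _, w, comp_distTriang_mor_zero₁₂ _ hT', hw⟩

open ZeroObject in
lemma isCofiltered_elements_of_exists_eq_map_of_map_eq_zero [HasZeroObject C]
    [HasBinaryBiproducts C] (F : C ⥤ AddCommGrpCat) [F.Additive]
    (hF : ∀ {X Y : C} (u : X ⟶ Y) (x : F.obj X), F.map u x = 0 →
      ∃ (W : C) (v : W ⟶ X) (w : F.obj W), v ≫ u = 0 ∧ F.map v w = x) :
    IsCofiltered (F ⋙ forget AddCommGrpCat).Elements where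
  nonempty := ⟨⟨0, 0⟩⟩
  cone_objs := by
    rintro ⟨X, x⟩ ⟨Y, y⟩
    exact ⟨⟨X ⊞ Y, F.map biprod.inl x + F.map biprod.inr y⟩,
      ⟨biprod.fst, F.map_fst_map_inl_add_map_inr x y⟩,
      ⟨biprod.snd, F.map_snd_map_inl_add_map_inr x y⟩, trivial⟩
  cone_maps := by
    rintro ⟨X, x⟩ ⟨Y, y⟩ ⟨f, hf⟩ ⟨g, hg⟩
    have hx : F.map (f - g) x = 0 := by
      change F.map f x = y at hf
      change F.map g x = y at hg
      simp [F.map_sub, hf, hg]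
    obtain ⟨W, v, w, hv, hw⟩ := hF (f - g) x hx
    exact ⟨⟨W, w⟩, ⟨v, hw⟩,
      Subtype.ext (show v ≫ f = v ≫ g from sub_eq_zero.1 (by rw [← Preadditive.comp_sub, hv]))⟩

end CategoryTheory.Functor

/-- For a small (pre)triangulated category `T` and a homological functor
`H : T ⥤ Ab`, the category of elements of `H` is cofiltered (equivalently, `H` is a
filtered colimit of representables in additive presheaves). -/
theorem stmt0 {T : Type} [SmallCategory T] [Preadditive T] [HasZeroObject T]
    [HasShift T ℤ] [∀ n : ℤ, (CategoryTheory.shiftFunctor T n).Additive]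
    [Pretriangulated T]
    (H : T ⥤ AddCommGrpCat.{0}) [H.Additive] [H.IsHomological] :
    IsCofiltered (Functor.Elements (H ⋙ forget AddCommGrpCat)) :=
  H.isCofiltered_elements_of_exists_eq_map_of_map_eq_zero
    (Functor.IsHomological.exists_eq_map_of_map_eq_zero H)
end

section
/- Let T be a rigid ⊗-triangulated category and H : T → A a Künneth functor. Then H-epimorphisms (morphisms p with Hp an epimorphism) are stable under homotopy pullback: if p : A → B is an H-epimorphism and g : B' → B is any morphism, then in any homotopy pullback square over (p, g) the morphism opposite to p is again an H-epimorphism, and H sends the square to a pullback square in A. -/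
/-!
Since `H p` is epi, so is `H (p, -g)`, hence `H` kills the connecting map `B ⟶ P⟦1⟧` and, by
exactness on the rotated triangle, `H (f⟦1⟧)` is mono. The shift is tensoring with the
⊗-invertible object `𝟙⟦1⟧`, and `H` is monoidal, so `H f` itself is mono. Thus
`0 ⟶ H P ⟶ H A ⊞ H B' ⟶ H B` is left exact, which says exactly that `H` of the square is a
pullback; in an abelian category epimorphisms are stable under pullback.
-/

open CategoryTheory Limits Pretriangulated MonoidalCategory

namespace CategoryTheory

section Monoidal

variable {C : Type*} [Category C] [MonoidalCategory C]

def tensorRightCompTensorRightIsoId {Z Z' : C} (w : Z ⊗ Z' ≅ 𝟙_ C) :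
    tensorRight Z ⋙ tensorRight Z' ≅ 𝟭 C :=
  NatIso.ofComponents (fun X => α_ X Z Z' ≪≫ whiskerLeftIso X w ≪≫ ρ_ X) fun {X Y} u => by
    dsimp
    rw [associator_naturality_left_assoc, whiskerLeftIso_hom, whiskerLeftIso_hom,
      ← whisker_exchange_assoc]
    simp

lemma faithful_tensorRight_of_tensor_iso_unit {Z Z' : C} (w : Z ⊗ Z' ≅ 𝟙_ C) :
    (tensorRight Z).Faithful :=
  Functor.Faithful.of_comp_iso (tensorRightCompTensorRightIsoId w)

lemma Functor.mono_of_mono_map_whiskerRight {D : Type*} [Category D] [MonoidalCategory D]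
    (F : C ⥤ D) [F.Monoidal] {Z Z' : C} (w : Z ⊗ Z' ≅ 𝟙_ C) {X Y : C} (f : X ⟶ Y)
    [Mono (F.map (f ▷ Z))] : Mono (F.map f) := by
  have hfaithful := faithful_tensorRight_of_tensor_iso_unit
    (Functor.Monoidal.μIso F Z Z' ≪≫ F.mapIso w ≪≫ (Functor.Monoidal.εIso F).symm)
  have : Mono (F.map f ▷ F.obj Z ≫ Functor.LaxMonoidal.μ F Y Z) := by
    rw [Functor.LaxMonoidal.μ_natural_left]
    infer_instance
  have : Mono (F.map f ▷ F.obj Z) := mono_of_mono _ (Functor.LaxMonoidal.μ F Y Z)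
  exact (tensorRight (F.obj Z)).mono_of_mono_map this

end Monoidal

section ShiftIsTensor

variable {C : Type*} [Category C] [HasShift C ℤ] [MonoidalCategory C] [BraidedCategory C]

def unitShiftTensorUnitShiftNegIso
    (e : shiftFunctor C (1 : ℤ) ≅ tensorRight ((𝟙_ C)⟦(1 : ℤ)⟧)) :
    (𝟙_ C)⟦(1 : ℤ)⟧ ⊗ (𝟙_ C)⟦(-1 : ℤ)⟧ ≅ 𝟙_ C :=
  β_ _ _ ≪≫ (e.app _).symm ≪≫ (shiftFunctorCompIsoId C (-1 : ℤ) 1 (by norm_num)).app (𝟙_ C)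

lemma mono_map_of_mono_map_shift (e : shiftFunctor C (1 : ℤ) ≅ tensorRight ((𝟙_ C)⟦(1 : ℤ)⟧))
    {D : Type*} [Category D] [MonoidalCategory D] (F : C ⥤ D) [F.Monoidal] {X Y : C} (f : X ⟶ Y)
    [Mono (F.map (f⟦(1 : ℤ)⟧'))] : Mono (F.map f) := by
  have hf : f ▷ (𝟙_ C)⟦(1 : ℤ)⟧ = inv (e.hom.app X) ≫ f⟦(1 : ℤ)⟧' ≫ e.hom.app Y := by
    rw [e.hom.naturality f]
    simp
  have : Mono (F.map (f ▷ (𝟙_ C)⟦(1 : ℤ)⟧)) := by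
    rw [hf, F.map_comp, F.map_comp]
    infer_instance
  exact F.mono_of_mono_map_whiskerRight (unitShiftTensorUnitShiftNegIso e) f

end ShiftIsTensor

lemma Functor.mono_map_shift_mor₁_of_epi_map_mor₂ {C A : Type*} [Category C] [Preadditive C]
    [HasZeroObject C] [HasShift C ℤ] [∀ n : ℤ, (shiftFunctor C n).Additive] [Pretriangulated C]
    [Category A] [Abelian A] (F : C ⥤ A) [F.IsHomological] {T : Triangle C}
    (hT : T ∈ distTriang C) (hT₂ : Epi (F.map T.mor₂)) : Mono (F.map (T.mor₁⟦(1 : ℤ)⟧')) := by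
  have hmor₃ : F.map T.mor₃ = 0 :=
    zero_of_epi_comp _ (by rw [← F.map_comp, comp_distTriang_mor_zero₂₃ _ hT, F.map_zero])
  have : Mono (F.map (-T.mor₁⟦(1 : ℤ)⟧')) :=
    (F.map_distinguished_exact _ (rot_of_distTriang _ (rot_of_distTriang _ hT))).mono_g hmor₃
  rw [F.map_neg] at this
  simpa using (inferInstance : Mono (-(-F.map (T.mor₁⟦(1 : ℤ)⟧'))))

lemma Functor.isPullback_map_of_exact {C D : Type*} [Category C] [Preadditive C]
    [HasBinaryBiproducts C] [Category D] [Abelian D] (F : C ⥤ D) [F.Additive] {P A B' B : C}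
    (f : P ⟶ A ⊞ B') (p : A ⟶ B) (g : B' ⟶ B) (w : f ≫ biprod.desc p (-g) = 0)
    (hS : ((ShortComplex.mk _ _ w).map F).Exact) [Mono (F.map f)] :
    IsPullback (F.map (f ≫ biprod.fst)) (F.map (f ≫ biprod.snd)) (F.map p) (F.map g) := by
  have sq : CommSq (F.map (f ≫ biprod.fst)) (F.map (f ≫ biprod.snd)) (F.map p) (F.map g) :=
    CommSq.map F ⟨by simpa [biprod.desc_eq, add_neg_eq_zero] using w⟩
  have := preservesBinaryBiproducts_of_preservesBiproducts F
  have hf : F.map f ≫ (F.mapBiprod A B').hom =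
      biprod.lift (F.map (f ≫ biprod.fst)) (F.map (f ≫ biprod.snd)) := by
    apply biprod.hom_ext <;>
      simp only [Category.assoc, Functor.mapBiprod_hom, biprod.lift_fst, biprod.lift_snd,
        F.map_comp]
  have hg : (F.mapBiprod A B').hom ≫ biprod.desc (F.map p) (-F.map g) =
      F.map (biprod.desc p (-g)) := by
    rw [← Iso.eq_inv_comp]
    apply biprod.hom_ext' <;>
      simp only [Functor.mapBiprod_inv, biprod.inl_desc_assoc, biprod.inr_desc_assoc,
        ← F.map_comp, biprod.inl_desc, biprod.inr_desc, F.map_neg]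
  let S' := ShortComplex.mk _ _ (sq.kernelFork.condition)
  let iso : (ShortComplex.mk _ _ w).map F ≅ S' :=
    ShortComplex.isoMk (Iso.refl _) (F.mapBiprod A B') (Iso.refl _)
      ((Category.id_comp _).trans hf.symm) (hg.trans (Category.comp_id _).symm)
  have : Mono S'.f := by
    dsimp [S']
    rw [← hf]
    exact mono_comp _ _
  exact IsPullback.of_isLimit' sq
    (sq.isLimitEquivIsLimitKernelFork.symm ((ShortComplex.exact_of_iso iso hS).fIsKernel))

end CategoryTheory

/-- In a rigid ⊗-triangulated category with a Künneth functor `H`,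
`H`-epimorphisms are stable under homotopy pullback: if `p : A ⟶ B` is an
`H`-epimorphism, `g : B' ⟶ B` is any morphism, and `P → A ⊞ B' → B → P[1]` is a
distinguished triangle on `biprod.desc p (-g)` (a homotopy pullback square), then
the morphism of the square opposite to `p` is again an `H`-epimorphism and `H`
sends the square to a pullback square. -/
theorem stmt3 {T : Type} [SmallCategory T] [Preadditive T] [HasZeroObject T]
    [HasShift T ℤ] [∀ n : ℤ, (CategoryTheory.shiftFunctor T n).Additive]
    [Pretriangulated T] [HasBinaryBiproducts T]
    [MonoidalCategory T] [SymmetricCategory T] [RigidCategory T]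
    (e : CategoryTheory.shiftFunctor T (1 : ℤ) ≅ tensorRight ((𝟙_ T)⟦(1 : ℤ)⟧))
    {V : Type 1} [Category.{0} V] [Abelian V] [MonoidalCategory V] [SymmetricCategory V]
    (H : T ⥤ V) [H.Additive] [H.Braided] [H.IsHomological]
    {A B B' P : T} (p : A ⟶ B) (g : B' ⟶ B)
    (hp : Epi (H.map p))
    (f : P ⟶ A ⊞ B') (h : B ⟶ P⟦(1 : ℤ)⟧)
    (hdT : Triangle.mk f (biprod.desc p (-g)) h ∈ distTriang T) :
    Epi (H.map (f ≫ biprod.snd)) ∧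
      IsPullback (H.map (f ≫ biprod.fst)) (H.map (f ≫ biprod.snd))
        (H.map p) (H.map g) := by
  have : Epi (H.map (biprod.desc p (-g))) :=
    epi_of_epi_fac (by rw [← H.map_comp, biprod.inl_desc] : H.map biprod.inl ≫ _ = H.map p)
  have : Mono (H.map (f⟦(1 : ℤ)⟧')) := H.mono_map_shift_mor₁_of_epi_map_mor₂ hdT this
  have : Mono (H.map f) := mono_map_of_mono_map_shift e H f
  have hPB := H.isPullback_map_of_exact f p g (comp_distTriang_mor_zero₁₂ _ hdT)
    (H.map_distinguished_exact _ hdT)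
  exact ⟨Abelian.epi_snd_of_isLimit _ _ hPB.isLimit, hPB⟩
end

section
/- Let T be a rigid ⊗-triangulated category and H a Künneth functor to graded K-vector spaces. If j : S → T(-,X) is a subfunctor of a representable presheaf such that j ⊗_T H is an isomorphism, then there exists an H-epimorphism p : Y → X such that T(-,p) factors through j. -/
/-!
Since `X` has a dual and `H` is monoidal, `H X` has a dual in `K`-vector spaces, so it is
finite-dimensional. `E S` is the colimit of the `H Y` over all `g : T(-,Y) ⟶ S`, and each of
these legs followed by `E j` is `H(φ g)` followed by `α_X`, where `T(-,φ g) = g ≫ j`. As `E j`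
is epi, the images of the `H(φ g)` span `H X`; finitely many of them already do, and `p` is
the map out of the direct sum of their sources.
-/

open CategoryTheory Limits Pretriangulated MonoidalCategory

universe u v₁ v₂ u₁ u₂

section

open Functor.LaxMonoidal Functor.OplaxMonoidal

abbrev Functor.Monoidal.exactPairing {C : Type u₁} {D : Type u₂} [Category.{v₁} C]
    [Category.{v₂} D] [MonoidalCategory C] [MonoidalCategory D] (F : C ⥤ D) [F.Monoidal]
    (X Y : C) [ExactPairing X Y] : ExactPairing (F.obj X) (F.obj Y) where
  coevaluation' := ε F ≫ F.map (η_ X Y) ≫ δ F X Y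
  evaluation' := μ F Y X ≫ F.map (ε_ X Y) ≫ η F
  coevaluation_evaluation' := by
    have h := congrArg F.map (ExactPairing.coevaluation_evaluation X Y)
    simp only [Functor.map_comp, Functor.Monoidal.map_whiskerLeft,
      Functor.Monoidal.map_whiskerRight, Functor.Monoidal.map_associator_inv,
      Functor.Monoidal.map_leftUnitor_inv, Functor.Monoidal.map_rightUnitor, Category.assoc,
      Functor.Monoidal.μ_δ_assoc, cancel_epi] at h
    simp only [← Category.assoc, cancel_mono] at h
    simp only [Category.assoc] at h
    simp only [comp_whiskerRight, whiskerLeft_comp, Category.assoc, reassoc_of% h]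
    simp [← comp_whiskerRight, ← whiskerLeft_comp_assoc]
  evaluation_coevaluation' := by
    have h := congrArg F.map (ExactPairing.evaluation_coevaluation X Y)
    simp only [Functor.map_comp, Functor.Monoidal.map_whiskerLeft,
      Functor.Monoidal.map_whiskerRight, Functor.Monoidal.map_associator,
      Functor.Monoidal.map_leftUnitor, Functor.Monoidal.map_rightUnitor_inv, Category.assoc,
      Functor.Monoidal.μ_δ_assoc, cancel_epi] at h
    simp only [← Category.assoc, cancel_mono] at h
    simp only [Category.assoc] at h
    simp only [comp_whiskerRight, whiskerLeft_comp, Category.assoc, reassoc_of% h]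
    simp [← comp_whiskerRight_assoc, ← whiskerLeft_comp]

end

namespace ModuleCat

theorem finite_of_exactPairing {R : Type*} [CommRing R] (A B : ModuleCat R)
    [ExactPairing A B] : Module.Finite R A := by
  classical
  obtain ⟨s, hs⟩ := TensorProduct.exists_finset (η_ A B (1 : R))
  have hspan (a : A) : a = ∑ p ∈ s, ε_ A B (p.2 ⊗ₜ a) • p.1 := by
    have h := congrArg (fun f => TensorProduct.rid R A (f ((1 : R) ⊗ₜ a)))
      (ExactPairing.evaluation_coevaluation A B)
    simp only [ConcreteCategory.comp_apply, MonoidalCategory.whiskerRight_apply, hs,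
      TensorProduct.sum_tmul, map_sum, MonoidalCategory.associator_hom_apply,
      MonoidalCategory.leftUnitor_hom_apply, MonoidalCategory.rightUnitor_inv_apply, one_smul,
      TensorProduct.rid_tmul] at h
    exact h.symm.trans (Finset.sum_congr rfl fun p _ => TensorProduct.rid_tmul _ _)
  refine ⟨⟨s.image Prod.fst, eq_top_iff.mpr fun a _ => ?_⟩⟩
  rw [hspan a]
  exact Submodule.sum_mem _ fun p hp =>
    Submodule.smul_mem _ _ (Submodule.subset_span (by simpa using ⟨p.2, hp⟩))

theorem finite_obj_of_exactPairing {C : Type*} [Category C] [MonoidalCategory C]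
    {R : Type u} [CommRing R] (F : C ⥤ ModuleCat.{u} R) [F.Monoidal] (X Y : C)
    [ExactPairing X Y] : Module.Finite R (F.obj X) :=
  letI := Functor.Monoidal.exactPairing F X Y
  finite_of_exactPairing (F.obj X) (F.obj Y)

theorem iSup_range_eq_top_of_hom_ext {R : Type*} [Ring R] {ι : Type*} {A : ι → ModuleCat R}
    {B : ModuleCat R} (f : ∀ i, A i ⟶ B)
    (hf : ∀ {W : ModuleCat R} (u v : B ⟶ W), (∀ i, f i ≫ u = f i ≫ v) → u = v) :
    ⨆ i, LinearMap.range (f i).hom = ⊤ := by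
  set N := ⨆ i, LinearMap.range (f i).hom
  have hq : ofHom N.mkQ = 0 := hf _ _ fun i => by
    ext x
    simpa [Submodule.Quotient.mk_eq_zero] using
      le_iSup (fun i => LinearMap.range (f i).hom) i ⟨x, rfl⟩
  rw [← Submodule.ker_mkQ N, show N.mkQ = 0 from congrArg Hom.hom hq, LinearMap.ker_zero]

end ModuleCat

instance additive_preadditiveYoneda {C : Type*} [Category C] [Preadditive C] :
    (preadditiveYoneda : C ⥤ Cᵒᵖ ⥤ AddCommGrpCat).Additive where
  map_add {_ _ _ _} := by
    ext
    exact Preadditive.comp_add _ _ _ _ _ _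

theorem exists_comp_eq_preadditiveYoneda_map_biproduct_desc {C : Type*} [Category C]
    [Preadditive C] {ι : Type} [Fintype ι] {Z : ι → C} [HasBiproduct Z] {X : C}
    (f : ∀ i, Z i ⟶ X) {S : Cᵒᵖ ⥤ AddCommGrpCat} (j : S ⟶ preadditiveYoneda.obj X)
    (hf : ∀ i, ∃ u, u ≫ j = preadditiveYoneda.map (f i)) :
    ∃ u, u ≫ j = preadditiveYoneda.map (biproduct.desc f) := by
  choose u hu using hf
  refine ⟨∑ i, preadditiveYoneda.map (biproduct.π Z i) ≫ u i, ?_⟩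
  rw [biproduct.desc_eq]
  simp only [Preadditive.sum_comp, Category.assoc, hu, ← Functor.map_comp, ← Functor.map_sum]

section LeftKanExtension

variable {C : Type u} [SmallCategory C] [Preadditive C] {D : Type*} [Category D]
  {H : C ⥤ D} {E : (Cᵒᵖ ⥤ AddCommGrpCat.{u}) ⥤ D} {α : H ⟶ preadditiveYoneda ⋙ E}

theorem hom_ext_of_epi_map_of_isPointwiseLeftKanExtension
    (hE : (Functor.LeftExtension.mk E α).IsPointwiseLeftKanExtension)
    {X : C} {S : Cᵒᵖ ⥤ AddCommGrpCat.{u}} (j : S ⟶ preadditiveYoneda.obj X) [Epi (E.map j)]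
    {W : D} (u v : H.obj X ⟶ W)
    (h : ∀ g : CostructuredArrow preadditiveYoneda S,
      H.map (preadditiveYoneda.preimage (g.hom ≫ j)) ≫ u =
        H.map (preadditiveYoneda.preimage (g.hom ≫ j)) ≫ v) :
    u = v := by
  have : IsIso (α.app X) := (hE (preadditiveYoneda.obj X)).isIso_hom_app
  rw [← cancel_epi (inv (α.app X)), ← cancel_epi (E.map j)]
  refine (hE S).hom_ext fun g => ?_
  have hφ := α.naturality (preadditiveYoneda.preimage (g.hom ≫ j))
  rw [Functor.comp_map, Functor.map_preimage] at hφ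
  change (α.app g.left ≫ E.map g.hom) ≫ _ = (α.app g.left ≫ E.map g.hom) ≫ _
  simp only [Category.assoc, ← E.map_comp_assoc, ← reassoc_of% hφ, IsIso.hom_inv_id_assoc, h]

end LeftKanExtension

/-- Let `T` be a rigid ⊗-triangulated category, `H` a Künneth functor to
(graded) `K`-vector spaces and `- ⊗_T H` (the functor `E` below) the left Kan extension of
`H` along the additive Yoneda embedding.  If `j : S ⟶ T(-,X)` is a subfunctor of a
representable presheaf such that `j ⊗_T H` is an isomorphism, then there exists an
`H`-epimorphism `p : Y ⟶ X` such that `T(-,p)` factors through `j`. -/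
theorem stmt4 {T : Type} [SmallCategory T] [Preadditive T] [HasZeroObject T]
    [HasShift T ℤ] [∀ n : ℤ, (CategoryTheory.shiftFunctor T n).Additive]
    [Pretriangulated T]
    [MonoidalCategory T] [SymmetricCategory T] [RigidCategory T]
    (e : CategoryTheory.shiftFunctor T (1 : ℤ) ≅ tensorRight ((𝟙_ T)⟦(1 : ℤ)⟧))
    {K : Type} [Field K]
    (H : T ⥤ ModuleCat.{0} K) [H.Additive] [H.Braided] [H.IsHomological]
    (E : (Tᵒᵖ ⥤ AddCommGrpCat.{0}) ⥤ ModuleCat.{0} K)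
    (α : H ⟶ preadditiveYoneda ⋙ E) [E.IsLeftKanExtension α]
    {X : T} {S : Tᵒᵖ ⥤ AddCommGrpCat.{0}} (j : S ⟶ preadditiveYoneda.obj X)
    [Mono j] (hj : IsIso (E.map j)) :
    ∃ (Y : T) (p : Y ⟶ X), Epi (H.map p) ∧
      ∃ u : preadditiveYoneda.obj Y ⟶ S, u ≫ j = preadditiveYoneda.map p := by
  have : Module.Finite K (H.obj X) := ModuleCat.finite_obj_of_exactPairing H X Xᘁ
  let φ (g : CostructuredArrow preadditiveYoneda S) : g.left ⟶ X :=
    preadditiveYoneda.preimage (g.hom ≫ j)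
  have hspan : ⨆ g, LinearMap.range (H.map (φ g)).hom = ⊤ :=
    ModuleCat.iSup_range_eq_top_of_hom_ext _ fun u v =>
      hom_ext_of_epi_map_of_isPointwiseLeftKanExtension
        (Functor.isPointwiseLeftKanExtensionOfIsLeftKanExtension E α) j u v
  obtain ⟨s, hs⟩ := CompleteLattice.IsCompactElement.exists_finset_of_le_iSup _
    ((Submodule.fg_iff_compact ⊤).mp Module.Finite.fg_top) _ hspan.ge
  refine ⟨⨁ fun g : s => g.1.left, biproduct.desc fun g => φ g.1, ?_,
    exists_comp_eq_preadditiveYoneda_map_biproduct_desc _ j fun g =>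
      ⟨g.1.hom, (Functor.map_preimage _ _).symm⟩⟩
  rw [ModuleCat.epi_iff_range_eq_top, eq_top_iff]
  refine hs.trans (iSup₂_le fun g hg => ?_)
  rw [← biproduct.ι_desc (fun g : s => φ g.1) ⟨g, hg⟩, H.map_comp, ModuleCat.hom_comp]
  exact LinearMap.range_comp_le_range _ _
end

section
/- Let T be a rigid ⊗-triangulated category and H a Künneth functor to graded K-vector spaces. An additive presheaf G : T^op → Ab is a sheaf for the Grothendieck topology generated by H-epimorphisms if and only if for every distinguished triangle F →^f X →^p Y → F[1] with Hp an epimorphism, the sequence 0 → GY → GX → GF is exact in Ab. -/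
/-! For a distinguished triangle `F → X → Y → F[1]`, every `f : Z ⟶ X` with `f ≫ p = 0` factors
through `F → X`, so the product `∏_{f ≫ p = 0} GZ` in the sheaf condition for `p : X ⟶ Y` can be
replaced by the single term `GF`. Since every morphism sits in a distinguished triangle, the
sheaf condition is exactly exactness of `0 → GY → GX → GF` along distinguished triangles. -/

open CategoryTheory Limits Pretriangulated MonoidalCategory Opposite

/-- The sheaf condition for the additive Grothendieck topology generated by the singleton
coverage of `H`-epimorphisms:  for every `H`-epimorphism `p : Y ⟶ X`, the sequence
`0 → GX → GY → ∏_{f : Z → Y, f ≫ p = 0} GZ` is exact. -/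
def IsAdditiveHSheaf {T : Type} [SmallCategory T] [Preadditive T] [HasZeroObject T]
    [HasShift T ℤ] [∀ n : ℤ, (CategoryTheory.shiftFunctor T n).Additive]
    [Pretriangulated T] {V : Type 1} [Category.{0} V] [Preadditive V]
    (H : T ⥤ V) (G : Tᵒᵖ ⥤ AddCommGrpCat.{0}) : Prop :=
  ∀ ⦃X Y : T⦄ (p : Y ⟶ X), Epi (H.map p) →
    Function.Injective (G.map p.op) ∧
      ∀ y : G.obj (op Y),
        (∀ (Z : T) (f : Z ⟶ Y), f ≫ p = 0 → G.map f.op y = 0) →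
          ∃ x : G.obj (op X), G.map p.op x = y

namespace CategoryTheory.Pretriangulated

variable {C : Type*} [Category C] [Preadditive C] [HasZeroObject C] [HasShift C ℤ]
  [∀ n : ℤ, (CategoryTheory.shiftFunctor C n).Additive] [Pretriangulated C]
  (G : Cᵒᵖ ⥤ AddCommGrpCat) {dT : Triangle C}

theorem Triangle.map_mor₁_op_eq_zero_iff (hdT : dT ∈ distTriang C) (y : G.obj (op dT.obj₂)) :
    G.map dT.mor₁.op y = 0 ↔ ∀ (Z : C) (f : Z ⟶ dT.obj₂), f ≫ dT.mor₂ = 0 → G.map f.op y = 0 := by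
  refine ⟨fun hy Z f hf => ?_, fun h => h _ _ (comp_distTriang_mor_zero₁₂ dT hdT)⟩
  obtain ⟨g, rfl⟩ := Triangle.coyoneda_exact₂ dT hdT f hf
  rw [op_comp, G.map_comp, ConcreteCategory.comp_apply, hy, map_zero]

theorem Triangle.map_mor₁_op_map_mor₂_op [G.PreservesZeroMorphisms] (hdT : dT ∈ distTriang C)
    (x : G.obj (op dT.obj₃)) : G.map dT.mor₁.op (G.map dT.mor₂.op x) = 0 := by
  simp [← ConcreteCategory.comp_apply, ← G.map_comp, ← op_comp, comp_distTriang_mor_zero₁₂ dT hdT]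

theorem Triangle.exact_map_op_iff [G.PreservesZeroMorphisms] (hdT : dT ∈ distTriang C) :
    Function.Exact (G.map dT.mor₂.op) (G.map dT.mor₁.op) ↔
      ∀ y : G.obj (op dT.obj₂),
        (∀ (Z : C) (f : Z ⟶ dT.obj₂), f ≫ dT.mor₂ = 0 → G.map f.op y = 0) →
          ∃ x, G.map dT.mor₂.op x = y := by
  simp only [← map_mor₁_op_eq_zero_iff G hdT]
  refine ⟨fun hex y hy => (hex y).1 hy, fun h y => ⟨h y, ?_⟩⟩
  rintro ⟨x, rfl⟩
  exact map_mor₁_op_map_mor₂_op G hdT x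

end CategoryTheory.Pretriangulated

/-- Let `T` be a rigid ⊗-triangulated category and `H` a Künneth functor to
(graded) `K`-vector spaces.  An additive presheaf `G : Tᵒᵖ ⥤ Ab` is a sheaf for the
topology generated by `H`-epimorphisms if and only if for every distinguished triangle
`F → X → Y → F[1]` with `H(X → Y)` an epimorphism, the sequence `0 → GY → GX → GF`
is exact. -/
theorem stmt5 {T : Type} [SmallCategory T] [Preadditive T] [HasZeroObject T]
    [HasShift T ℤ] [∀ n : ℤ, (CategoryTheory.shiftFunctor T n).Additive]
    [Pretriangulated T]
    [MonoidalCategory T] [SymmetricCategory T] [RigidCategory T]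
    (e : CategoryTheory.shiftFunctor T (1 : ℤ) ≅ tensorRight ((𝟙_ T)⟦(1 : ℤ)⟧))
    {K : Type} [Field K]
    (H : T ⥤ ModuleCat.{0} K) [H.Additive] [H.Braided] [H.IsHomological]
    (G : Tᵒᵖ ⥤ AddCommGrpCat.{0}) [G.Additive] :
    IsAdditiveHSheaf H G ↔
      ∀ (dT : Triangle T), dT ∈ (distTriang T) → Epi (H.map dT.mor₂) →
        Function.Injective (G.map dT.mor₂.op) ∧
          Function.Exact (G.map dT.mor₂.op) (G.map dT.mor₁.op) := by
  refine ⟨fun hG dT hdT hepi => ?_, fun hT X Y p hepi => ?_⟩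
  · obtain ⟨hinj, hsurj⟩ := hG dT.mor₂ hepi
    exact ⟨hinj, (Triangle.exact_map_op_iff G hdT).2 hsurj⟩
  · obtain ⟨F, f, _, hd⟩ := distinguished_cocone_triangle₁ p
    obtain ⟨hinj, hex⟩ := hT _ hd hepi
    exact ⟨hinj, (Triangle.exact_map_op_iff G hd).1 hex⟩
end

section
/- Let T be a rigid ⊗-triangulated category and H : T → graded K-vector spaces a Künneth functor. Then the functor sending a graded vector space V to the presheaf X ↦ Hom(HX, V) takes values in the category of sheaves Sh_H(T) for the topology generated by H-epimorphisms. -/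
open CategoryTheory Limits Pretriangulated MonoidalCategory Opposite

namespace CategoryTheory.Functor.IsHomological

variable {C A : Type*} [Category C] [HasZeroObject C] [Preadditive C] [HasShift C ℤ]
  [∀ n : ℤ, (shiftFunctor C n).Additive] [Pretriangulated C] [Category A] [Abelian A]
  (H : C ⥤ A) [H.IsHomological]

/-- Complete `p` to a distinguished triangle `Z ⟶ Y ⟶ X ⟶ Z⟦1⟧`: then `H Z ⟶ H Y ⟶ H X ⟶ 0`
is exact, so `H X` is the cokernel of `H Z ⟶ H Y`. -/
lemma exists_map_comp_eq {X Y : C} (p : Y ⟶ X) [Epi (H.map p)] {V : A} (φ : H.obj Y ⟶ V)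
    (hφ : ∀ (Z : C) (f : Z ⟶ Y), f ≫ p = 0 → H.map f ≫ φ = 0) :
    ∃ ψ : H.obj X ⟶ V, H.map p ≫ ψ = φ := by
  obtain ⟨Z, f, _, hT⟩ := distinguished_cocone_triangle₁ p
  have hexact := H.map_distinguished_exact _ hT
  have : Epi ((shortComplexOfDistTriangle _ hT).map H).g := ‹Epi (H.map p)›
  exact hexact.desc' φ (hφ Z f (comp_distTriang_mor_zero₁₂ _ hT))

end CategoryTheory.Functor.IsHomological

theorem isAdditiveHSheaf_comp_preadditiveYoneda {T : Type} [SmallCategory T] [Preadditive T]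
    [HasZeroObject T] [HasShift T ℤ] [∀ n : ℤ, (shiftFunctor T n).Additive] [Pretriangulated T]
    {A : Type 1} [Category.{0} A] [Abelian A] (H : T ⥤ A) [H.IsHomological] (V : A) :
    IsAdditiveHSheaf H (H.op ⋙ preadditiveYoneda.obj V) := fun _ _ p _ =>
  ⟨fun _ _ hab => (cancel_epi (H.map p)).mp hab,
    fun y hy => Functor.IsHomological.exists_map_comp_eq H p y hy⟩

/-- For a rigid ⊗-triangulated `T` and a Künneth functor
`H : T ⥤ (graded K-vector spaces)`, the functor sending a vector space `V` to the
presheaf `X ↦ Hom(HX, V)` takes values in the category of sheaves for the topology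
generated by `H`-epimorphisms. -/
theorem stmt6 {T : Type} [SmallCategory T] [Preadditive T] [HasZeroObject T]
    [HasShift T ℤ] [∀ n : ℤ, (CategoryTheory.shiftFunctor T n).Additive]
    [Pretriangulated T]
    [MonoidalCategory T] [SymmetricCategory T] [RigidCategory T]
    (e : CategoryTheory.shiftFunctor T (1 : ℤ) ≅ tensorRight ((𝟙_ T)⟦(1 : ℤ)⟧))
    {K : Type} [Field K]
    (H : T ⥤ ModuleCat.{0} K) [H.Additive] [H.Braided] [H.IsHomological]
    (V : ModuleCat.{0} K) :
    IsAdditiveHSheaf H (H.op ⋙ preadditiveYoneda.obj V) :=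
  isAdditiveHSheaf_comp_preadditiveYoneda H V
end
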